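/- arXiv:2410.11784 — 3 statements merged into one kernel-verified Lean document; each statement's English description precedes it below -/
import Mathlib

section
/- Let D be a positive integer with decimal expansion D = Σ_{i=0}^n a_i·10^i (a_n ≠ 0) such that D > rev(D) and E = D − rev(D) has the same number of decimal digits as D, and let F = E + rev(E) be the Papadakis–Webster integer produced by D. Then F is divisible by 99, and every decimal digit of the quotient F/99 is 0 or 1. -/
/-!
Let `a_i` be the `k` digits of `D`, `R = rev D`, and let `c_j ∈ {0, 1}` be the borrow into
position `j` when `R` is subtracted from `D` (`c_0 = c_k = 0`). The `i`-th digit of `E = D - R`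
is `a_i - a_{k-1-i} + 10 c_{i+1} - c_i`. As `E` has exactly `k` digits, `rev E` reads these
backwards: the `a`-terms add up to `R - D = -E`, and the borrow terms telescope, leaving
`E + rev E = 99 · Σ_j c_j 10^(k-1-j)`. So `F / 99` is the number whose digits are the borrows.
-/

/-- Digital reversal of a natural number (in base 10). -/
def rev (D : ℕ) : ℕ := Nat.ofDigits 10 ((Nat.digits 10 D).reverse)

open Finset

namespace Nat

theorem ofDigits_eq_sum_range (b : ℕ) (L : List ℕ) :
    ofDigits b L = ∑ i ∈ range L.length, L.getD i 0 * b ^ i := by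
  induction L with
  | nil => simp
  | cons d L ih =>
    simp [ofDigits_cons, ih, sum_range_succ', pow_succ', mul_sum, mul_left_comm, add_comm]

theorem ofDigits_reverse_eq_sum_range (b : ℕ) (L : List ℕ) :
    ofDigits b L.reverse = ∑ i ∈ range L.length, L.getD (L.length - 1 - i) 0 * b ^ i := by
  rw [ofDigits_eq_sum_range, List.length_reverse]
  exact sum_congr rfl fun i hi => by rw [List.getD_reverse i (mem_range.mp hi)]

theorem ofDigits_div_pow_mod {b : ℕ} {L : List ℕ} (hL : ∀ l ∈ L, l < b) (i : ℕ) :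
    ofDigits b L / b ^ i % b = L.getD i 0 := by
  induction L generalizing i with
  | nil => simp
  | cons d L ih =>
    have hd : d < b := hL d List.mem_cons_self
    cases i with
    | zero => simp [ofDigits_cons, Nat.mod_eq_of_lt hd]
    | succ i =>
      rw [pow_succ', ← Nat.div_div_eq_div_mul, ofDigits_cons, Nat.add_mul_div_left _ _ (by omega),
        Nat.div_eq_of_lt hd, zero_add, ih fun l hl => hL l (List.mem_cons_of_mem _ hl)]
      simp

theorem mem_of_mem_digits_ofDigits {b : ℕ} (hb : 1 < b) {L : List ℕ} (hL : ∀ l ∈ L, l < b)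
    {d : ℕ} (hd : d ∈ digits b (ofDigits b L)) : d ∈ L := by
  induction L with
  | nil => simp at hd
  | cons x L ih =>
    rw [ofDigits_cons] at hd
    by_cases h : x = 0 ∧ ofDigits b L = 0
    · simp [h] at hd
    · rw [digits_add b hb x _ (hL x List.mem_cons_self) (by tauto)] at hd
      rcases List.mem_cons.mp hd with rfl | hd
      · exact List.mem_cons_self
      · exact List.mem_cons_of_mem _ (ih (fun l hl => hL l (List.mem_cons_of_mem _ hl)) hd)

theorem eq_sum_range_div_pow_mod {b : ℕ} (hb : 2 ≤ b) (x : ℕ) :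
    x = ∑ i ∈ range (digits b x).length, x / b ^ i % b * b ^ i := by
  conv_lhs => rw [← ofDigits_digits b x, ofDigits_eq_sum_range]
  simp only [getD_digits _ _ hb]

end Nat

theorem rev_eq_sum_range (x : ℕ) :
    rev x = ∑ i ∈ range (Nat.digits 10 x).length,
      x / 10 ^ ((Nat.digits 10 x).length - 1 - i) % 10 * 10 ^ i := by
  simp only [rev, Nat.ofDigits_reverse_eq_sum_range, Nat.getD_digits _ _ (by norm_num : 2 ≤ 10)]

theorem rev_div_pow_mod {x i : ℕ} (hi : i < (Nat.digits 10 x).length) :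
    rev x / 10 ^ i % 10 = x / 10 ^ ((Nat.digits 10 x).length - 1 - i) % 10 := by
  rw [rev, Nat.ofDigits_div_pow_mod, List.getD_reverse i hi,
    Nat.getD_digits _ _ (by norm_num : 2 ≤ 10)]
  exact fun l hl => Nat.digits_lt_base (by norm_num) (List.mem_reverse.mp hl)

-- `borrow (b ^ j) x y` is the borrow into digit `j` of the schoolbook subtraction `x - y`.
def borrow (m x y : ℕ) : ℕ := if x % m < y % m then 1 else 0

theorem borrow_le_one (m x y : ℕ) : borrow m x y ≤ 1 := by
  unfold borrow; split <;> simp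

theorem borrow_one (x y : ℕ) : borrow 1 x y = 0 := by simp [borrow, Nat.mod_one]

theorem borrow_of_le_of_lt {m x y : ℕ} (hyx : y ≤ x) (hx : x < m) : borrow m x y = 0 := by
  rw [borrow, Nat.mod_eq_of_lt hx, Nat.mod_eq_of_lt (hyx.trans_lt hx), if_neg (not_lt.mpr hyx)]

theorem natCast_sub_mod {x y : ℕ} (h : y ≤ x) (m : ℕ) :
    (((x - y) % m : ℕ) : ℤ) = (x % m : ℕ) - (y % m : ℕ) + m * borrow m x y := by
  rcases Nat.eq_zero_or_pos m with rfl | hm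
  · simp [borrow, Nat.cast_sub h]
  have hx := Nat.mod_lt x hm
  have hy := Nat.mod_lt y hm
  rw [Int.natCast_mod, Nat.cast_sub h, Int.sub_emod, ← Int.natCast_mod, ← Int.natCast_mod, borrow]
  split_ifs with hlt
  · rw [Int.emod_eq_add_self_emod, Int.emod_eq_of_lt] <;> omega
  · rw [Int.emod_eq_of_lt] <;> omega

theorem natCast_sub_div_pow_mod {b x y : ℕ} (hb : 0 < b) (h : y ≤ x) (i : ℕ) :
    (((x - y) / b ^ i % b : ℕ) : ℤ) = (x / b ^ i % b : ℕ) - (y / b ^ i % b : ℕ)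
      + b * borrow (b ^ (i + 1)) x y - borrow (b ^ i) x y := by
  have digit_mul_pow (z : ℕ) :
      ((z / b ^ i % b : ℕ) : ℤ) * b ^ i = (z % b ^ (i + 1) : ℕ) - (z % b ^ i : ℕ) := by
    rw [Nat.mod_pow_succ]; push_cast; ring
  have hxy := digit_mul_pow (x - y)
  rw [natCast_sub_mod h, natCast_sub_mod h] at hxy
  refine mul_right_cancel₀ (pow_ne_zero i (by exact_mod_cast hb.ne' : (b : ℤ) ≠ 0)) ?_
  simp only [Nat.cast_pow] at hxy
  linear_combination hxy - digit_mul_pow x + digit_mul_pow y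

theorem sum_range_mul_sub_mul_pow {R : Type*} [CommRing R] (b : R) (d : ℕ → R) (k : ℕ) :
    ∑ i ∈ range k, (b * d i - d (i + 1)) * b ^ i
      = b * d 0 - b ^ (k + 1) * d k + (b ^ 2 - 1) * ∑ i ∈ range k, d (i + 1) * b ^ i := by
  induction k with
  | zero => simp
  | succ k ih => rw [sum_range_succ, ih, sum_range_succ]; ring

theorem natCast_rev_sub_rev {D : ℕ} (hle : rev D ≤ D)
    (hlen : (Nat.digits 10 (D - rev D)).length = (Nat.digits 10 D).length) :
    ((rev (D - rev D) : ℕ) : ℤ) = rev D - D + ∑ i ∈ range (Nat.digits 10 D).length,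
      (10 * borrow (10 ^ ((Nat.digits 10 D).length - i)) D (rev D)
        - borrow (10 ^ ((Nat.digits 10 D).length - (i + 1))) D (rev D) : ℤ) * 10 ^ i := by
  set k := (Nat.digits 10 D).length
  have hD : (D : ℤ) = ∑ i ∈ range k, ((D / 10 ^ i % 10 : ℕ) : ℤ) * 10 ^ i := by
    exact_mod_cast Nat.eq_sum_range_div_pow_mod (by norm_num) D
  have hR : (rev D : ℤ) = ∑ i ∈ range k, ((D / 10 ^ (k - 1 - i) % 10 : ℕ) : ℤ) * 10 ^ i := by
    exact_mod_cast rev_eq_sum_range D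
  rw [rev_eq_sum_range, hlen, hD, hR, ← sum_sub_distrib, ← sum_add_distrib]
  simp only [Nat.cast_sum, Nat.cast_mul, Nat.cast_pow, Nat.cast_ofNat]
  refine sum_congr rfl fun i hi => ?_
  have hi : i < k := mem_range.mp hi
  rw [natCast_sub_div_pow_mod (by norm_num) hle, rev_div_pow_mod (by omega),
    show k - 1 - (k - 1 - i) = i by omega, show k - 1 - i + 1 = k - i by omega,
    show k - 1 - i = k - (i + 1) by omega]
  ring

def subRevBorrows (D : ℕ) : List ℕ :=
  ((List.range (Nat.digits 10 D).length).map fun j => borrow (10 ^ j) D (rev D)).reverse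

theorem le_one_of_mem_subRevBorrows {D l : ℕ} (hl : l ∈ subRevBorrows D) : l ≤ 1 := by
  obtain ⟨j, -, rfl⟩ := List.mem_map.mp (List.mem_reverse.mp hl)
  exact borrow_le_one _ _ _

theorem sub_rev_add_rev_sub_rev {D : ℕ} (hle : rev D ≤ D)
    (hlen : (Nat.digits 10 (D - rev D)).length = (Nat.digits 10 D).length) :
    D - rev D + rev (D - rev D) = 99 * Nat.ofDigits 10 (subRevBorrows D) := by
  set k := (Nat.digits 10 D).length
  set c : ℕ → ℕ := fun j => borrow (10 ^ j) D (rev D)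
  have hc0 : c 0 = 0 := borrow_one D (rev D)
  have hck : c k = 0 := borrow_of_le_of_lt hle (Nat.lt_base_pow_length_digits (by norm_num))
  have hQ : Nat.ofDigits 10 ((List.range k).map c).reverse
      = ∑ i ∈ range k, c (k - (i + 1)) * 10 ^ i := by
    rw [Nat.ofDigits_reverse_eq_sum_range, List.length_map, List.length_range]
    refine sum_congr rfl fun i hi => ?_
    have hi : i < k := mem_range.mp hi
    rw [List.getD_eq_getElem _ _ (by simp; omega), List.getElem_map, List.getElem_range,
      show k - 1 - i = k - (i + 1) by omega]
  have htel := sum_range_mul_sub_mul_pow (10 : ℤ) (fun i => (c (k - i) : ℤ)) k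
  simp only [Nat.sub_zero, Nat.sub_self, hc0, hck] at htel
  rw [subRevBorrows, hQ]
  zify [hle]
  rw [natCast_rev_sub_rev hle hlen, htel]
  push_cast
  ring

theorem stmt1_general (D : ℕ) (hlt : rev D < D)
    (hlen : (Nat.digits 10 (D - rev D)).length = (Nat.digits 10 D).length) :
    99 ∣ ((D - rev D) + rev (D - rev D)) ∧
      ∀ d ∈ Nat.digits 10 (((D - rev D) + rev (D - rev D)) / 99), d = 0 ∨ d = 1 := by
  rw [sub_rev_add_rev_sub_rev hlt.le hlen, Nat.mul_div_cancel_left _ (by norm_num)]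
  refine ⟨dvd_mul_right _ _, fun d hd => ?_⟩
  have hd_le := le_one_of_mem_subRevBorrows (Nat.mem_of_mem_digits_ofDigits (by norm_num)
    (fun l hl => (le_one_of_mem_subRevBorrows hl).trans_lt (by norm_num)) hd)
  omega

/-- If `D > rev D` and `E = D - rev D` has the same number of decimal
digits as `D`, then the Papadakis–Webster integer `F = E + rev E` is divisible by 99,
and every decimal digit of `F / 99` is 0 or 1. -/
theorem stmt1 (D : ℕ) (hpos : 0 < D) (hlt : rev D < D)
    (hlen : (Nat.digits 10 (D - rev D)).length = (Nat.digits 10 D).length) :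
    99 ∣ ((D - rev D) + rev (D - rev D)) ∧
      ∀ d ∈ Nat.digits 10 (((D - rev D) + rev (D - rev D)) / 99), d = 0 ∨ d = 1 :=
  stmt1_general D hlt hlen
end

section
/- Let D be a positive integer that is the smaller element of a 2-cycle of the iterative digital reversal map (equivalently, rev(D) = 9·D). Then D has at least four decimal digits, its first two decimal digits (most significant first) are 1 and 0, and its last two decimal digits are 8 and 9; i.e., writing D = Σ_{i=0}^n a_i·10^i with a_n ≠ 0, one has n ≥ 3, a_n = 1, a_{n−1} = 0, a_1 = 8 and a_0 = 9. -/
/-- A number `n < 100` read as a two-digit string and reversed, keeping leading zeros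
(`revTwo 5 = 50`, whereas `rev 5 = 5`). -/
def revTwo (n : ℕ) : ℕ := 10 * (n % 10) + n / 10

open Nat

lemma ofDigits_reverse_eq_revTwo {l : List ℕ} (hl : l.length = 2) (hlt : ∀ x ∈ l, x < 10) :
    ofDigits 10 l.reverse = revTwo (ofDigits 10 l) := by
  match l, hl with
  | [x, y], _ =>
    have hx := hlt x (by simp)
    simp only [List.reverse_cons, List.reverse_nil, List.nil_append, List.cons_append,
      ofDigits_cons, ofDigits_nil, revTwo]
    omega

lemma rev_lt_pow_length (D : ℕ) : rev D < 10 ^ (digits 10 D).length := by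
  simpa [rev] using ofDigits_lt_base_pow_length (l := (digits 10 D).reverse) (by norm_num)
    fun x hx => digits_lt_base (by norm_num) (List.mem_reverse.mp hx)

lemma rev_div_pow_length_sub_two {D : ℕ} (hk : 2 ≤ (digits 10 D).length) :
    rev D / 10 ^ ((digits 10 D).length - 2) = revTwo (D % 100) := by
  have hlt : ∀ x ∈ digits 10 D, x < 10 := fun x hx => digits_lt_base (by norm_num) hx
  rw [rev, ofDigits_div_pow_eq_ofDigits_drop _ (by norm_num) _
      fun x hx => hlt x (List.mem_reverse.mp hx),
    List.drop_reverse, Nat.sub_sub_self hk, ofDigits_reverse_eq_revTwo (by simp; omega)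
      fun x hx => hlt x (List.mem_of_mem_take hx),
    show 100 = 10 ^ 2 by norm_num, self_mod_pow_eq_ofDigits_take _ _ (by norm_num)]

lemma rev_mod_hundred {D : ℕ} (hk : 2 ≤ (digits 10 D).length) :
    rev D % 100 = revTwo (D / 10 ^ ((digits 10 D).length - 2)) := by
  have hlt : ∀ x ∈ digits 10 D, x < 10 := fun x hx => digits_lt_base (by norm_num) hx
  rw [rev, show 100 = 10 ^ 2 by norm_num, ofDigits_mod_pow_eq_ofDigits_take _ (by norm_num) _
      fun x hx => hlt x (List.mem_reverse.mp hx),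
    List.take_reverse, ofDigits_reverse_eq_revTwo (by simp; omega)
      fun x hx => hlt x (List.mem_of_mem_drop hx),
    self_div_pow_eq_ofDigits_drop _ _ (by norm_num)]

lemma eq_ten_and_eq_89_of_revTwo {T B : ℕ} (hT : 10 ≤ T ∧ T ≤ 11) (hB : B < 100)
    (htop : 9 * T ≤ revTwo B ∧ revTwo B < 9 * T + 9) (hbot : revTwo T = 9 * B % 100) :
    T = 10 ∧ B = 89 := by
  obtain ⟨hT10, hT11⟩ := hT
  unfold revTwo at *
  interval_cases T <;> omega

/-- if `D` is the smaller element of an IDR 2-cycle (equivalently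
`rev D = 9·D`), then `D` has at least four decimal digits, its first two digits
(most significant first) are 1 and 0, and its last two digits are 8 and 9.
Here `Nat.digits 10 D` is the little-endian digit list, so the entry at index `i`
is `a_i`, and the last entry (index `length - 1`) is the leading digit `a_n`. -/
theorem stmt10 (D : ℕ) (hD : 0 < D) (h : rev D = 9 * D) :
    4 ≤ (Nat.digits 10 D).length ∧
    (Nat.digits 10 D).getD ((Nat.digits 10 D).length - 1) 0 = 1 ∧
    (Nat.digits 10 D).getD ((Nat.digits 10 D).length - 2) 0 = 0 ∧
    (Nat.digits 10 D).getD 1 0 = 8 ∧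
    (Nat.digits 10 D).getD 0 0 = 9 := by
  set k := (digits 10 D).length
  have hlow : 10 ^ k ≤ 10 * D := base_pow_length_digits_le 10 D (by norm_num) hD.ne'
  have hhigh : 9 * D < 10 ^ k := h ▸ rev_lt_pow_length D
  have hk : 2 ≤ k := by
    by_contra! hk
    interval_cases k
    · omega
    · obtain rfl : D = 1 := by omega
      norm_num [rev] at h
  set Q := 10 ^ (k - 2) with hQ
  have hQpos : 0 < Q := by positivity
  have hpow : 10 ^ k = 100 * Q := by
    rw [hQ, show 100 = 10 ^ 2 by norm_num, ← pow_add]; congr 1; omega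
  have hT : 10 ≤ D / Q ∧ D / Q ≤ 11 :=
    ⟨(Nat.le_div_iff_mul_le hQpos).mpr (by omega),
      Nat.lt_succ_iff.mp ((Nat.div_lt_iff_lt_mul hQpos).mpr (by omega))⟩
  have htop : 9 * (D / Q) ≤ revTwo (D % 100) ∧ revTwo (D % 100) < 9 * (D / Q) + 9 := by
    rw [← rev_div_pow_length_sub_two hk, h]
    refine ⟨Nat.mul_div_le_mul_div_assoc 9 D Q, (Nat.div_lt_iff_lt_mul hQpos).mpr ?_⟩
    nlinarith [Nat.lt_div_mul_add (a := D) hQpos]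
  have hbot : revTwo (D / Q) = 9 * (D % 100) % 100 := by
    rw [← rev_mod_hundred hk, h, Nat.mul_mod]
  obtain ⟨hT, hB⟩ := eq_ten_and_eq_89_of_revTwo hT (Nat.mod_lt _ (by norm_num)) htop hbot
  have hk1 : 10 ^ (k - 1) = Q * 10 := by rw [hQ, ← pow_succ]; congr 1; omega
  simp only [getD_digits _ _ (show 2 ≤ 10 by norm_num), hk1, ← Nat.div_div_eq_div_mul, hT]
  refine ⟨?_, by norm_num, by rw [← hQ, hT], by omega, by omega⟩
  by_contra! hk4
  interval_cases k <;> simp only [hQ] at hT <;> omega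
end

section
/- For all integers L ≥ 0 and K ≥ 0, the integer N = M_L·(10^{L+4+K} + 1), where M_L = 11·(10^{L+2} − 1), whose decimal digit string is the symmetric concatenation 10(9)_L89 (0)_K 10(9)_L89 (two copies of the motif 10(9)_L89 separated by K zeros), satisfies rev(N) = 9·N; consequently N and 10·N form a 2-cycle of the iterative digital reversal map. -/
/-- The iterative digital reversal map: `D ↦ D - rev D` if `rev D < D`,
and `D ↦ D + rev D` if `rev D ≥ D`. -/
def IDR (D : ℕ) : ℕ := if rev D < D then D - rev D else D + rev D

/-!
The number `M = 11·(10^(L+2) - 1)` has digits `10(9)_L89`, and reversing them gives `98(9)_L01`,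
which is `9·M` (the case `L = 0` is the classical `9801 = 9·1089`). Reversal commutes with the
doubling `m ↦ m·(10^(ℓ+K) + 1)`, ℓ the number of digits of `m`, since the digits of the doubled
number are those of `m`, `K` zeros and those of `m` again; hence `rev N = 9·N`. Whenever
`rev N = 9·N`, the map `IDR` sends `N` to `10·N`, and since a trailing zero is lost on
reversal, `rev (10·N) = 9·N` and `IDR` sends `10·N` back to `N`.
-/

theorem Nat.ofDigits_replicate_pred (b n : ℕ) :
    Nat.ofDigits b (List.replicate n (b - 1)) = b ^ n - 1 := by
  induction n with
  | zero => simp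
  | succ n ih =>
    rw [List.replicate_succ, Nat.ofDigits_cons, ih, pow_succ]
    rcases b.eq_zero_or_pos with rfl | hb
    · simp
    · have hbn : 0 < b ^ n := by positivity
      zify [hb, hbn, Nat.mul_pos hbn hb]
      ring

theorem rev_ten_mul (n : ℕ) : rev (10 * n) = rev n := by
  rcases n.eq_zero_or_pos with rfl | hn
  · rfl
  · simp [rev, Nat.digits_base_mul (by norm_num : 1 < 10) hn]

theorem rev_mul_pow_add_one {m : ℕ} (hm : 0 < m) (K : ℕ) :
    rev (m * (10 ^ ((Nat.digits 10 m).length + K) + 1)) =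
      rev m * (10 ^ ((Nat.digits 10 m).length + K) + 1) := by
  rw [rev, mul_add_one, mul_comm, add_comm,
    ← Nat.digits_append_zeroes_append_digits (by norm_num) hm]
  simp only [List.reverse_append, List.reverse_replicate, Nat.ofDigits_append,
    Nat.ofDigits_replicate_zero, List.length_reverse, List.length_replicate]
  rw [rev]
  ring

theorem ofDigits_replicate_nine (L : ℕ) : Nat.ofDigits 10 (List.replicate L 9) = 10 ^ L - 1 :=
  Nat.ofDigits_replicate_pred 10 L

theorem digits_eleven_mul_pow_sub_one (L : ℕ) :
    Nat.digits 10 (11 * (10 ^ (L + 2) - 1)) = [9, 8] ++ List.replicate L 9 ++ [0, 1] := by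
  have hval : Nat.ofDigits 10 ([9, 8] ++ List.replicate L 9 ++ [0, 1]) =
      11 * (10 ^ (L + 2) - 1) := by
    have : 1 ≤ 10 ^ L := Nat.one_le_pow L 10 (by norm_num)
    simp only [Nat.ofDigits_append, ofDigits_replicate_nine, Nat.ofDigits_cons,
      Nat.ofDigits_nil, List.length_append, List.length_replicate, List.length_cons,
      List.length_nil]
    zify [this, Nat.one_le_pow (L + 2) 10 (by norm_num)]
    ring
  rw [← hval]
  refine Nat.digits_ofDigits 10 (by norm_num) _ (fun d hd => ?_) (fun _ => by simp)
  simp only [List.mem_append, List.mem_replicate, List.mem_cons, List.not_mem_nil,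
    or_false] at hd
  omega

theorem rev_eleven_mul_pow_sub_one (L : ℕ) :
    rev (11 * (10 ^ (L + 2) - 1)) = 9 * (11 * (10 ^ (L + 2) - 1)) := by
  have : 1 ≤ 10 ^ L := Nat.one_le_pow L 10 (by norm_num)
  simp only [rev, digits_eleven_mul_pow_sub_one, List.reverse_append, List.reverse_replicate,
    List.reverse_cons, List.reverse_nil, List.nil_append, List.append_assoc, List.cons_append,
    Nat.ofDigits_append, ofDigits_replicate_nine, Nat.ofDigits_cons, Nat.ofDigits_nil,
    List.length_replicate]
  zify [this, Nat.one_le_pow (L + 2) 10 (by norm_num)]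
  ring

theorem IDR_two_cycle_of_rev_eq_nine_mul {n : ℕ} (hn : 0 < n) (h : rev n = 9 * n) :
    IDR n = 10 * n ∧ IDR (10 * n) = n := by
  have h10 : rev (10 * n) = 9 * n := (rev_ten_mul n).trans h
  constructor
  · rw [IDR, h, if_neg (by omega)]
    ring
  · rw [IDR, h10, if_pos (by omega)]
    omega

/-- for all `L, K ≥ 0`, the integer
`N = 11·(10^{L+2} - 1) · (10^{L+4+K} + 1)`, whose decimal digit string is the
symmetric concatenation `10(9)_L 89 (0)_K 10(9)_L 89`, satisfies `rev N = 9·N`;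
consequently `N` and `10·N` form a 2-cycle of IDR. -/
theorem stmt12 (L K : ℕ) :
    rev (11 * (10 ^ (L + 2) - 1) * (10 ^ (L + 4 + K) + 1)) =
      9 * (11 * (10 ^ (L + 2) - 1) * (10 ^ (L + 4 + K) + 1)) ∧
    IDR (11 * (10 ^ (L + 2) - 1) * (10 ^ (L + 4 + K) + 1)) =
      10 * (11 * (10 ^ (L + 2) - 1) * (10 ^ (L + 4 + K) + 1)) ∧
    IDR (10 * (11 * (10 ^ (L + 2) - 1) * (10 ^ (L + 4 + K) + 1))) =
      11 * (10 ^ (L + 2) - 1) * (10 ^ (L + 4 + K) + 1) := by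
  have hM : 0 < 11 * (10 ^ (L + 2) - 1) := by
    have : 1 < 10 ^ (L + 2) := Nat.one_lt_pow (by omega) (by norm_num)
    omega
  have hlen : (Nat.digits 10 (11 * (10 ^ (L + 2) - 1))).length = L + 4 := by
    rw [digits_eleven_mul_pow_sub_one]
    simp
  have hrev : rev (11 * (10 ^ (L + 2) - 1) * (10 ^ (L + 4 + K) + 1)) =
      9 * (11 * (10 ^ (L + 2) - 1) * (10 ^ (L + 4 + K) + 1)) := by
    rw [← hlen, rev_mul_pow_add_one hM, rev_eleven_mul_pow_sub_one, mul_assoc]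
  exact ⟨hrev, IDR_two_cycle_of_rev_eq_nine_mul (by positivity) hrev⟩
end
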